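/- Let γ ∈ (0,1) and let Φ solve Φ''(z) + (z/2)Φ'(z) + (γ/2)Φ(z) = 0 with Φ(0)=1, Φ'(0)=0. Then there exist c > 0 and C > 0 such that −C·z^(−γ−1) ≤ Φ'(z) ≤ −c·z^(−γ−1) for all z ≥ 1. -/

import Mathlib

/-!
Write `E z = exp (z ^ 2 / 4)`. The ODE yields the identities
`(E Φ')' = -(γ/2) E Φ`, `(2Φ' + zΦ)' = (1 - γ) Φ`, `(E Φ)' = E (2Φ' + zΦ) / 2` and
`(E (zΦ' + γΦ))' = (1 + γ) E Φ'`. The second and third show that `Φ` cannot have a first zero,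
so `Φ > 0` and then `Φ' < 0`. Monotonicity of `z ^ (γ - 1) (2Φ' + zΦ)` and, through
`zΦ' + γΦ ≤ γ / E`, of `z ^ γ Φ + 2γ exp (-z² / 4)` gives `Φ ≍ z ^ (-γ)` on `[1, ∞)`.
Finally `E Φ'` is compared with multiples of `z ^ (-γ - 1) E`, whose derivative is
`z ^ (-γ) E / 2` up to lower order, which turns `Φ ≍ z ^ (-γ)` into `Φ' ≍ z ^ (-γ - 1)`.
-/

open Real Set

section Monotonicity

variable {D : Set ℝ} {f f' : ℝ → ℝ}

theorem Convex.monotoneOn_of_hasDerivAt_nonneg (hD : Convex ℝ D)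
    (hf : ∀ x ∈ D, HasDerivAt f (f' x) x) (hf' : ∀ x ∈ interior D, 0 ≤ f' x) :
    MonotoneOn f D :=
  monotoneOn_of_hasDerivWithinAt_nonneg hD (fun x hx ↦ (hf x hx).continuousAt.continuousWithinAt)
    (fun x hx ↦ (hf x (interior_subset hx)).hasDerivWithinAt) hf'

theorem Convex.antitoneOn_of_hasDerivAt_nonpos (hD : Convex ℝ D)
    (hf : ∀ x ∈ D, HasDerivAt f (f' x) x) (hf' : ∀ x ∈ interior D, f' x ≤ 0) :
    AntitoneOn f D :=
  antitoneOn_of_hasDerivWithinAt_nonpos hD (fun x hx ↦ (hf x hx).continuousAt.continuousWithinAt)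
    (fun x hx ↦ (hf x (interior_subset hx)).hasDerivWithinAt) hf'

theorem Convex.strictMonoOn_of_hasDerivAt_pos (hD : Convex ℝ D)
    (hf : ∀ x ∈ D, HasDerivAt f (f' x) x) (hf' : ∀ x ∈ interior D, 0 < f' x) :
    StrictMonoOn f D :=
  strictMonoOn_of_hasDerivWithinAt_pos hD (fun x hx ↦ (hf x hx).continuousAt.continuousWithinAt)
    (fun x hx ↦ (hf x (interior_subset hx)).hasDerivWithinAt) hf'

theorem Convex.strictAntiOn_of_hasDerivAt_neg (hD : Convex ℝ D)
    (hf : ∀ x ∈ D, HasDerivAt f (f' x) x) (hf' : ∀ x ∈ interior D, f' x < 0) :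
    StrictAntiOn f D :=
  strictAntiOn_of_hasDerivWithinAt_neg hD (fun x hx ↦ (hf x hx).continuousAt.continuousWithinAt)
    (fun x hx ↦ (hf x (interior_subset hx)).hasDerivWithinAt) hf'

end Monotonicity

theorem hasDerivAt_exp_sq_div_four (z : ℝ) :
    HasDerivAt (fun z ↦ exp (z ^ 2 / 4)) (z / 2 * exp (z ^ 2 / 4)) z := by
  refine ((hasDerivAt_pow 2 z).div_const 4).exp.congr_deriv ?_
  push_cast
  ring

theorem hasDerivAt_rpow_mul_exp_sq_div_four {z : ℝ} (hz : 0 < z) (p : ℝ) :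
    HasDerivAt (fun z ↦ z ^ p * exp (z ^ 2 / 4))
      ((p / z + z / 2) * (z ^ p * exp (z ^ 2 / 4))) z := by
  refine ((hasDerivAt_rpow_const (Or.inl hz.ne')).mul
    (hasDerivAt_exp_sq_div_four z)).congr_deriv ?_
  rw [rpow_sub_one hz.ne']
  ring

theorem inv_nine_le_rpow {γ : ℝ} (hγ : γ ≤ 1) {z : ℝ} (hz1 : 1 ≤ z) (hz3 : z ≤ 3) :
    (9 : ℝ)⁻¹ ≤ z ^ (-γ - 1) := by
  calc (9 : ℝ)⁻¹ ≤ (z ^ 2)⁻¹ := by gcongr; nlinarith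
    _ = z ^ (-2 : ℝ) := by rw [rpow_neg (by linarith), rpow_two]
    _ ≤ z ^ (-γ - 1) := rpow_le_rpow_of_exponent_le hz1 (by linarith)

structure IsProfile (γ : ℝ) (Φ φ : ℝ → ℝ) : Prop where
  hasDerivAt : ∀ z ≥ 0, HasDerivAt Φ (φ z) z
  hasDerivAt_deriv : ∀ z ≥ 0, HasDerivAt φ (-(z / 2 * φ z) - γ / 2 * Φ z) z
  map_zero : Φ 0 = 1
  deriv_zero : φ 0 = 0

namespace IsProfile

variable {γ : ℝ} {Φ φ : ℝ → ℝ}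

theorem hasDerivAt_exp_mul_deriv (P : IsProfile γ Φ φ) {z : ℝ} (hz : 0 ≤ z) :
    HasDerivAt (fun z ↦ exp (z ^ 2 / 4) * φ z) (-(γ / 2) * (exp (z ^ 2 / 4) * Φ z)) z := by
  refine ((hasDerivAt_exp_sq_div_four z).mul (P.hasDerivAt_deriv z hz)).congr_deriv ?_
  ring

theorem hasDerivAt_exp_mul_deriv_add (P : IsProfile γ Φ φ) (c : ℝ) {z : ℝ} (hz : 0 < z) :
    HasDerivAt (fun z ↦ exp (z ^ 2 / 4) * φ z + c * (z ^ (-γ - 1) * exp (z ^ 2 / 4)))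
      (exp (z ^ 2 / 4) * ((c * z ^ (-γ) - γ * Φ z) / 2 - c * (γ + 1) * z ^ (-γ) / z ^ 2)) z := by
  refine ((P.hasDerivAt_exp_mul_deriv hz.le).add
    ((hasDerivAt_rpow_mul_exp_sq_div_four hz _).const_mul c)).congr_deriv ?_
  rw [rpow_sub_one hz.ne']
  field_simp
  ring

theorem hasDerivAt_exp_mul (P : IsProfile γ Φ φ) {z : ℝ} (hz : 0 ≤ z) :
    HasDerivAt (fun z ↦ exp (z ^ 2 / 4) * Φ z)
      (exp (z ^ 2 / 4) * (2 * φ z + z * Φ z) / 2) z := by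
  refine ((hasDerivAt_exp_sq_div_four z).mul (P.hasDerivAt z hz)).congr_deriv ?_
  ring

theorem hasDerivAt_two_deriv_add (P : IsProfile γ Φ φ) {z : ℝ} (hz : 0 ≤ z) :
    HasDerivAt (fun z ↦ 2 * φ z + z * Φ z) ((1 - γ) * Φ z) z := by
  refine (((P.hasDerivAt_deriv z hz).const_mul 2).add
    ((hasDerivAt_id' z).mul (P.hasDerivAt z hz))).congr_deriv ?_
  ring

theorem hasDerivAt_exp_mul_euler (P : IsProfile γ Φ φ) {z : ℝ} (hz : 0 ≤ z) :
    HasDerivAt (fun z ↦ exp (z ^ 2 / 4) * (z * φ z + γ * Φ z))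
      ((1 + γ) * (exp (z ^ 2 / 4) * φ z)) z := by
  refine ((hasDerivAt_exp_sq_div_four z).mul (((hasDerivAt_id' z).mul
    (P.hasDerivAt_deriv z hz)).add ((P.hasDerivAt z hz).const_mul γ))).congr_deriv ?_
  simp only [Pi.add_apply, Pi.mul_apply]
  ring

theorem one_le_exp_mul_of_pos (P : IsProfile γ Φ φ) (hγ : γ ≤ 1) {t : ℝ} (ht : 0 ≤ t)
    (hpos : ∀ z ∈ Ioo 0 t, 0 < Φ z) : 1 ≤ exp (t ^ 2 / 4) * Φ t := by
  have hN : MonotoneOn (fun z ↦ 2 * φ z + z * Φ z) (Icc 0 t) :=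
    (convex_Icc 0 t).monotoneOn_of_hasDerivAt_nonneg (fun z hz ↦ P.hasDerivAt_two_deriv_add hz.1)
      fun z hz ↦ by
        rw [interior_Icc] at hz
        exact mul_nonneg (by linarith) (hpos z hz).le
  have hH : MonotoneOn (fun z ↦ exp (z ^ 2 / 4) * Φ z) (Icc 0 t) :=
    (convex_Icc 0 t).monotoneOn_of_hasDerivAt_nonneg (fun z hz ↦ P.hasDerivAt_exp_mul hz.1)
      fun z hz ↦ by
        rw [interior_Icc] at hz
        have : 0 ≤ 2 * φ z + z * Φ z := by
          simpa [P.deriv_zero] using hN (left_mem_Icc.2 ht) (Ioo_subset_Icc_self hz) hz.1.le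
        positivity
  simpa [P.map_zero] using hH (left_mem_Icc.2 ht) (right_mem_Icc.2 ht) ht

theorem pos (P : IsProfile γ Φ φ) (hγ : γ ≤ 1) {z : ℝ} (hz : 0 ≤ z) : 0 < Φ z := by
  by_contra! hz'
  set S := Ici 0 ∩ Φ ⁻¹' Iic 0
  have hS : IsClosed S :=
    ContinuousOn.preimage_isClosed_of_isClosed
      (fun z hz ↦ (P.hasDerivAt z hz).continuousAt.continuousWithinAt) isClosed_Ici isClosed_Iic
  have hbdd : BddBelow S := ⟨0, fun x hx ↦ hx.1⟩
  obtain ⟨ht, htΦ⟩ : sInf S ∈ S := hS.csInf_mem ⟨z, hz, hz'⟩ hbdd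
  have := P.one_le_exp_mul_of_pos hγ ht fun x hx ↦ by
    by_contra! hx'
    exact (csInf_le hbdd ⟨hx.1.le, hx'⟩).not_gt hx.2
  have := exp_pos (sInf S ^ 2 / 4)
  nlinarith [show Φ (sInf S) ≤ 0 from htΦ]

theorem strictAntiOn_exp_mul_deriv (P : IsProfile γ Φ φ) (hγ0 : 0 < γ) (hγ1 : γ ≤ 1) :
    StrictAntiOn (fun z ↦ exp (z ^ 2 / 4) * φ z) (Ici 0) :=
  (convex_Ici 0).strictAntiOn_of_hasDerivAt_neg (fun _ hz ↦ P.hasDerivAt_exp_mul_deriv hz)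
    fun z hz ↦ by
      rw [interior_Ici] at hz
      have := mul_pos (exp_pos (z ^ 2 / 4)) (P.pos hγ1 (le_of_lt hz))
      nlinarith

theorem deriv_neg (P : IsProfile γ Φ φ) (hγ0 : 0 < γ) (hγ1 : γ ≤ 1) {z : ℝ} (hz : 0 < z) :
    φ z < 0 := by
  have := P.strictAntiOn_exp_mul_deriv hγ0 hγ1 self_mem_Ici hz.le hz
  simp only [P.deriv_zero, mul_zero] at this
  exact neg_of_mul_neg_right this (exp_pos _).le

theorem le_one (P : IsProfile γ Φ φ) (hγ0 : 0 < γ) (hγ1 : γ ≤ 1) {z : ℝ} (hz : 0 ≤ z) :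
    Φ z ≤ 1 :=
  P.map_zero ▸ (convex_Ici 0).antitoneOn_of_hasDerivAt_nonpos P.hasDerivAt
    (fun x hx ↦ by rw [interior_Ici] at hx; exact (P.deriv_neg hγ0 hγ1 hx).le)
    self_mem_Ici hz hz

theorem euler_le (P : IsProfile γ Φ φ) (hγ0 : 0 < γ) (hγ1 : γ ≤ 1) {z : ℝ} (hz : 0 ≤ z) :
    z * φ z + γ * Φ z ≤ γ * exp (-(z ^ 2 / 4)) := by
  have hA : exp (z ^ 2 / 4) * (z * φ z + γ * Φ z) ≤ γ := by
    simpa [P.deriv_zero, P.map_zero] using (convex_Ici 0).antitoneOn_of_hasDerivAt_nonpos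
      (fun _ hx ↦ P.hasDerivAt_exp_mul_euler hx)
      (fun x hx ↦ by
        rw [interior_Ici] at hx
        have := mul_neg_of_pos_of_neg (exp_pos (x ^ 2 / 4)) (P.deriv_neg hγ0 hγ1 hx)
        nlinarith)
      self_mem_Ici hz hz
  rw [exp_neg, ← div_eq_mul_inv, le_div_iff₀ (exp_pos _)]
  linarith

theorem le_three_mul_rpow_neg (P : IsProfile γ Φ φ) (hγ0 : 0 < γ) (hγ1 : γ ≤ 1) {z : ℝ}
    (hz : 1 ≤ z) : Φ z ≤ 3 * z ^ (-γ) := by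
  have hexp : ∀ x : ℝ, HasDerivAt (fun x ↦ exp (-(x ^ 2 / 4))) (-(x / 2) * exp (-(x ^ 2 / 4))) x :=
    fun x ↦ ((hasDerivAt_pow 2 x).div_const 4).neg.exp.congr_deriv
      (by simp only [Pi.neg_apply]; push_cast; ring)
  have hanti : AntitoneOn (fun x ↦ x ^ γ * Φ x + 2 * γ * exp (-(x ^ 2 / 4))) (Ici 1) := by
    refine (convex_Ici 1).antitoneOn_of_hasDerivAt_nonpos (fun x hx ↦
      ((hasDerivAt_rpow_const (Or.inl (by linarith [mem_Ici.1 hx]))).mul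
        (P.hasDerivAt x (by linarith [mem_Ici.1 hx]))).add ((hexp x).const_mul (2 * γ)))
      fun x hx ↦ ?_
    rw [interior_Ici, mem_Ioi] at hx
    have hx0 : 0 < x := by linarith
    have hq : x ^ (γ - 1) ≤ 1 := rpow_le_one_of_one_le_of_nonpos hx.le (by linarith)
    have hq0 : 0 < x ^ (γ - 1) := rpow_pos_of_pos hx0 _
    have hxγ : x ^ γ = x ^ (γ - 1) * x := by rw [rpow_sub_one hx0.ne', div_mul_cancel₀ _ hx0.ne']
    have heuler := mul_le_mul_of_nonneg_left (P.euler_le hγ0 hγ1 hx0.le) hq0.le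
    have := mul_nonneg (mul_nonneg hγ0.le (exp_pos (-(x ^ 2 / 4))).le)
      (sub_nonneg.2 (hq.trans hx.le))
    rw [hxγ]
    nlinarith
  have h1 := hanti self_mem_Ici hz hz
  have := P.le_one hγ0 hγ1 zero_le_one
  have := exp_pos (-(z ^ 2 / 4))
  have : exp (-(1 ^ 2 / 4)) ≤ 1 := exp_le_one_iff.2 (by norm_num)
  simp only [one_rpow, one_mul] at h1
  have hz0 : 0 < z := by linarith
  calc Φ z = z ^ (-γ) * (z ^ γ * Φ z) := by
        rw [← mul_assoc, ← rpow_add hz0, neg_add_cancel, rpow_zero, one_mul]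
    _ ≤ z ^ (-γ) * 3 := by gcongr; nlinarith
    _ = 3 * z ^ (-γ) := mul_comm _ _

theorem two_deriv_add_pos (P : IsProfile γ Φ φ) (hγ1 : γ < 1) {z : ℝ} (hz : 0 < z) :
    0 < 2 * φ z + z * Φ z := by
  have := (convex_Ici 0).strictMonoOn_of_hasDerivAt_pos
    (fun _ hz ↦ P.hasDerivAt_two_deriv_add hz)
    (fun x hx ↦ by
      rw [interior_Ici] at hx
      exact mul_pos (by linarith) (P.pos hγ1.le (le_of_lt hx)))
    self_mem_Ici hz.le hz
  simpa [P.deriv_zero] using this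

theorem monotoneOn_rpow_mul_two_deriv_add (P : IsProfile γ Φ φ) (hγ0 : 0 < γ) (hγ1 : γ ≤ 1) :
    MonotoneOn (fun z ↦ z ^ (γ - 1) * (2 * φ z + z * Φ z)) (Ioi 0) := by
  refine (convex_Ioi 0).monotoneOn_of_hasDerivAt_nonneg (fun x hx ↦
    (hasDerivAt_rpow_const (Or.inl (ne_of_gt hx))).mul (P.hasDerivAt_two_deriv_add (le_of_lt hx)))
    fun x hx ↦ ?_
  rw [interior_Ioi, mem_Ioi] at hx
  have hq0 : 0 < x ^ (γ - 1) := rpow_pos_of_pos hx _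
  have key : (γ - 1) * x ^ (γ - 1 - 1) * (2 * φ x + x * Φ x) + x ^ (γ - 1) * ((1 - γ) * Φ x)
      = 2 * (1 - γ) * x ^ (γ - 1) * (-φ x) / x := by
    rw [rpow_sub_one hx.ne']
    field_simp
    ring
  rw [key]
  have := P.deriv_neg hγ0 hγ1 hx
  exact div_nonneg (mul_nonneg (mul_nonneg (by linarith) hq0.le) (by linarith)) hx.le

theorem two_deriv_add_mul_rpow_neg_le (P : IsProfile γ Φ φ) (hγ0 : 0 < γ) (hγ1 : γ ≤ 1) {z : ℝ}
    (hz : 1 ≤ z) : (2 * φ 1 + Φ 1) * z ^ (-γ) ≤ Φ z := by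
  have hz0 : 0 < z := by linarith
  have hmono := P.monotoneOn_rpow_mul_two_deriv_add hγ0 hγ1 (mem_Ioi.2 one_pos) (mem_Ioi.2 hz0) hz
  have hφ := P.deriv_neg hγ0 hγ1 hz0
  have hxγ : z ^ (γ - 1) * z * z ^ (-γ) = 1 := by
    rw [rpow_sub_one hz0.ne', div_mul_cancel₀ _ hz0.ne', rpow_neg hz0.le,
      mul_inv_cancel₀ (rpow_pos_of_pos hz0 γ).ne']
  simp only [one_rpow, one_mul] at hmono
  have := rpow_pos_of_pos hz0 (-γ)
  have := rpow_pos_of_pos hz0 (γ - 1)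
  calc (2 * φ 1 + Φ 1) * z ^ (-γ) ≤ z ^ (γ - 1) * (2 * φ z + z * Φ z) * z ^ (-γ) := by gcongr
    _ ≤ z ^ (γ - 1) * (z * Φ z) * z ^ (-γ) := by gcongr; linarith
    _ = Φ z := by linear_combination Φ z * hxγ

theorem deriv_le_neg_mul_rpow (P : IsProfile γ Φ φ) (hγ : 0 ≤ γ) {m c : ℝ}
    (hm : ∀ z ≥ 1, m * z ^ (-γ) ≤ Φ z) (hc : 0 ≤ c) (hcm : c ≤ γ * m) (hc1 : c ≤ -φ 1)
    {z : ℝ} (hz : 1 ≤ z) : φ z ≤ -c * z ^ (-γ - 1) := by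
  have hanti : AntitoneOn
      (fun x ↦ exp (x ^ 2 / 4) * φ x + c * (x ^ (-γ - 1) * exp (x ^ 2 / 4))) (Ici 1) := by
    refine (convex_Ici 1).antitoneOn_of_hasDerivAt_nonpos
      (fun x hx ↦ P.hasDerivAt_exp_mul_deriv_add c (by linarith [mem_Ici.1 hx])) fun x hx ↦ ?_
    rw [interior_Ici, mem_Ioi] at hx
    have hs := rpow_pos_of_pos (zero_lt_one.trans hx) (-γ)
    have h1 : γ * (m * x ^ (-γ)) ≤ γ * Φ x := mul_le_mul_of_nonneg_left (hm x hx.le) hγ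
    have h2 : c * x ^ (-γ) ≤ γ * m * x ^ (-γ) := mul_le_mul_of_nonneg_right hcm hs.le
    have h3 : 0 ≤ c * (γ + 1) * x ^ (-γ) / x ^ 2 := by positivity
    exact mul_nonpos_of_nonneg_of_nonpos (exp_pos _).le (by nlinarith)
  have h := hanti self_mem_Ici hz hz
  simp only [one_rpow, one_mul] at h
  have hE1 := exp_pos (1 ^ 2 / 4 : ℝ)
  have : exp (z ^ 2 / 4) * (φ z + c * z ^ (-γ - 1)) ≤ 0 := by nlinarith
  linarith [nonpos_of_mul_nonpos_right this (exp_pos _)]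

-- `(z ^ (-γ - 1) E)' ≥ z ^ (-γ) E / 4` as soon as `z ^ 2 ≥ 4 (γ + 1)`, in particular on `[3, ∞)`.
theorem monotoneOn_exp_mul_deriv_add (P : IsProfile γ Φ φ) (hγ0 : 0 ≤ γ) (hγ1 : γ ≤ 1)
    {K C : ℝ} (hK : ∀ z ≥ 1, Φ z ≤ K * z ^ (-γ)) (hC : 0 ≤ C) (hKC : 2 * γ * K ≤ C) :
    MonotoneOn (fun x ↦ exp (x ^ 2 / 4) * φ x + C * (x ^ (-γ - 1) * exp (x ^ 2 / 4)))
      (Ici 3) := by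
  refine (convex_Ici 3).monotoneOn_of_hasDerivAt_nonneg
    (fun x hx ↦ P.hasDerivAt_exp_mul_deriv_add C (by linarith [mem_Ici.1 hx])) fun x hx ↦ ?_
  rw [interior_Ici, mem_Ioi] at hx
  have hs := rpow_pos_of_pos (by linarith : (0 : ℝ) < x) (-γ)
  have h1 : γ * Φ x ≤ γ * (K * x ^ (-γ)) := mul_le_mul_of_nonneg_left (hK x (by linarith)) hγ0
  have h2 : 2 * γ * K * x ^ (-γ) ≤ C * x ^ (-γ) := mul_le_mul_of_nonneg_right hKC hs.le
  have h3 : C * (γ + 1) * x ^ (-γ) / x ^ 2 ≤ C * x ^ (-γ) / 4 := by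
    rw [div_le_div_iff₀ (by positivity) (by norm_num)]
    have : 4 * (γ + 1) ≤ x ^ 2 := by nlinarith
    have := mul_le_mul_of_nonneg_left this (mul_nonneg hC hs.le)
    nlinarith
  exact mul_nonneg (exp_pos _).le (by nlinarith)

theorem neg_mul_rpow_le_deriv (P : IsProfile γ Φ φ) (hγ0 : 0 < γ) (hγ1 : γ ≤ 1) {K C : ℝ}
    (hK : ∀ z ≥ 1, Φ z ≤ K * z ^ (-γ)) (hKC : 2 * γ * K ≤ C)
    (hC : -9 * (exp (3 ^ 2 / 4) * φ 3) ≤ C) {z : ℝ} (hz : 1 ≤ z) :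
    -C * z ^ (-γ - 1) ≤ φ z := by
  have hφ3 : exp (3 ^ 2 / 4) * φ 3 < 0 :=
    mul_neg_of_pos_of_neg (exp_pos _) (P.deriv_neg hγ0 hγ1 (by norm_num))
  have hC0 : 0 ≤ C := by linarith
  have hEz : 1 ≤ exp (z ^ 2 / 4) := one_le_exp (by positivity)
  suffices 0 ≤ exp (z ^ 2 / 4) * (φ z + C * z ^ (-γ - 1)) by
    linarith [nonneg_of_mul_nonneg_right this (exp_pos _)]
  rcases le_total z 3 with hz3 | hz3
  · have hB := (P.strictAntiOn_exp_mul_deriv hγ0 hγ1).antitoneOn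
      (mem_Ici.2 (by linarith)) (mem_Ici.2 (by norm_num)) hz3
    have hr := inv_nine_le_rpow hγ1 hz hz3
    have := mul_le_mul hr hEz (by norm_num) (rpow_pos_of_pos (by linarith) _).le
    nlinarith
  · have hF := P.monotoneOn_exp_mul_deriv_add hγ0.le hγ1 hK hC0 hKC self_mem_Ici hz3 hz3
    have hr := inv_nine_le_rpow hγ1 (by norm_num) le_rfl
    have hE3 : 1 ≤ exp (3 ^ 2 / 4 : ℝ) := one_le_exp (by positivity)
    have := mul_le_mul_of_nonneg_left hr hC0
    simp only at hF
    nlinarith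

theorem exists_deriv_le_neg_mul_rpow (P : IsProfile γ Φ φ) (hγ0 : 0 < γ) (hγ1 : γ < 1) :
    ∃ c > 0, ∀ z ≥ 1, φ z ≤ -c * z ^ (-γ - 1) := by
  have hN : 0 < 2 * φ 1 + Φ 1 := by simpa using P.two_deriv_add_pos hγ1 one_pos
  have hc : 0 < min (γ * (2 * φ 1 + Φ 1)) (-φ 1) :=
    lt_min (by positivity) (neg_pos.2 (P.deriv_neg hγ0 hγ1.le one_pos))
  exact ⟨_, hc, fun z hz ↦ P.deriv_le_neg_mul_rpow hγ0.le
    (fun x hx ↦ P.two_deriv_add_mul_rpow_neg_le hγ0 hγ1.le hx) hc.le (min_le_left _ _)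
    (min_le_right _ _) hz⟩

theorem exists_neg_mul_rpow_le_deriv (P : IsProfile γ Φ φ) (hγ0 : 0 < γ) (hγ1 : γ ≤ 1) :
    ∃ C > 0, ∀ z ≥ 1, -C * z ^ (-γ - 1) ≤ φ z := by
  have hφ3 : exp (3 ^ 2 / 4) * φ 3 < 0 :=
    mul_neg_of_pos_of_neg (exp_pos _) (P.deriv_neg hγ0 hγ1 (by norm_num))
  exact ⟨6 - 9 * (exp (3 ^ 2 / 4) * φ 3), by linarith, fun z hz ↦
    P.neg_mul_rpow_le_deriv hγ0 hγ1 (fun x hx ↦ P.le_three_mul_rpow_neg hγ0 hγ1 hx)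
      (by nlinarith) (by linarith) hz⟩

end IsProfile

theorem isProfile_of_contDiff {γ : ℝ} {Φ : ℝ → ℝ} (hΦ : ContDiff ℝ 2 Φ)
    (hode : ∀ z ≥ (0 : ℝ), deriv (deriv Φ) z + z / 2 * deriv Φ z + γ / 2 * Φ z = 0)
    (h0 : Φ 0 = 1) (h0' : deriv Φ 0 = 0) : IsProfile γ Φ (deriv Φ) where
  hasDerivAt z _ := (hΦ.differentiable (by norm_num) z).hasDerivAt
  hasDerivAt_deriv z hz := by
    have hφ : ContDiff ℝ 1 (deriv Φ) := hΦ.deriv' (n := 1)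
    refine (hφ.differentiable (by norm_num) z).hasDerivAt.congr_deriv ?_
    linarith [hode z hz]
  map_zero := h0
  deriv_zero := h0'

/-- Let `γ ∈ (0,1)` and `Φ` solve `Φ'' + (z/2)Φ' + (γ/2)Φ = 0` with
`Φ(0)=1`, `Φ'(0)=0`. Then there are `c, C > 0` with
`−C z^(−γ−1) ≤ Φ'(z) ≤ −c z^(−γ−1)` for all `z ≥ 1`. -/
theorem stmt8 (γ : ℝ) (hγ : γ ∈ Set.Ioo (0 : ℝ) 1) (Φ : ℝ → ℝ)
    (hsmooth : ContDiff ℝ 2 Φ)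
    (hode : ∀ z ≥ (0 : ℝ), deriv (deriv Φ) z + z / 2 * deriv Φ z + γ / 2 * Φ z = 0)
    (h0 : Φ 0 = 1) (h0' : deriv Φ 0 = 0) :
    ∃ c > (0 : ℝ), ∃ C > (0 : ℝ), ∀ z ≥ (1 : ℝ),
      -C * z ^ (-γ - 1) ≤ deriv Φ z ∧ deriv Φ z ≤ -c * z ^ (-γ - 1) := by
  have P := isProfile_of_contDiff hsmooth hode h0 h0'
  obtain ⟨c, hc, hle⟩ := P.exists_deriv_le_neg_mul_rpow hγ.1 hγ.2
  obtain ⟨C, hC, hge⟩ := P.exists_neg_mul_rpow_le_deriv hγ.1 hγ.2.le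
  exact ⟨c, hc, C, hC, fun z hz ↦ ⟨hge z hz, hle z hz⟩⟩
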